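/- For every ε ∈ (0, T) one has lim_{Λ↓0} sup_{0 ≤ s ≤ T−ε} ‖ (1/(2Λ)) · ∫_s^T (K^Λ_{t,s})² dt − σ^{-1}/(4√A) ‖ = 0, where ‖·‖ is any matrix norm. -/

import Mathlib

open MeasureTheory ProbabilityTheory Matrix Filter

noncomputable section

/-- Matrix hyperbolic sine `sinh(M) = (exp M − exp(−M))/2`. -/
def sinhM {d : ℕ} (M : Matrix (Fin d) (Fin d) ℝ) : Matrix (Fin d) (Fin d) ℝ :=
  (2 : ℝ)⁻¹ • (NormedSpace.exp M - NormedSpace.exp (-M))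

/-- Matrix hyperbolic cosine `cosh(M) = (exp M + exp(−M))/2`. -/
def coshM {d : ℕ} (M : Matrix (Fin d) (Fin d) ℝ) : Matrix (Fin d) (Fin d) ℝ :=
  (2 : ℝ)⁻¹ • (NormedSpace.exp M + NormedSpace.exp (-M))

/-- `K^Λ_{t,s} = cosh(√A(T−t)σ/Λ) (sinh(√A(T−s)σ/Λ))⁻¹`. -/
def Kmat {d : ℕ} (T A : ℝ) (σ : Matrix (Fin d) (Fin d) ℝ) (Λ t s : ℝ) :
    Matrix (Fin d) (Fin d) ℝ :=
  coshM ((Real.sqrt A * (T - t) / Λ) • σ) * (sinhM ((Real.sqrt A * (T - s) / Λ) • σ))⁻¹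

/-- `L^Λ_{t,s} = sinh(√A(T−t)σ/Λ) (sinh(√A(T−s)σ/Λ))⁻¹`. -/
def Lmat {d : ℕ} (T A : ℝ) (σ : Matrix (Fin d) (Fin d) ℝ) (Λ t s : ℝ) :
    Matrix (Fin d) (Fin d) ℝ :=
  sinhM ((Real.sqrt A * (T - t) / Λ) • σ) * (sinhM ((Real.sqrt A * (T - s) / Λ) • σ))⁻¹

/-- Frobenius norm of a matrix. -/
def matNorm {d : ℕ} (M : Matrix (Fin d) (Fin d) ℝ) : ℝ :=
  Real.sqrt (∑ i, ∑ j, (M i j) ^ 2)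

/-! Diagonalising `σ = U diag(μ) Uᵀ` turns every matrix in the statement into `U diag(·) Uᵀ`, so
the quantity inside the norm is `U diag(g_k) Uᵀ`, where `g_k` is the same expression for the
scalar `μ_k`. Integrating `cosh²` explicitly, with `τ = T - s` and `x = √A μ_k τ / Λ`,
`g_k = τ / (4Λ sinh² x) + e^{-x} / (4√A μ_k sinh x)`, and `sinh x ≥ x` bounds each term by
`Λ / (4 A μ_k² τ)`. Since `τ ≥ ε`, the Frobenius norm is `O(Λ)` uniformly in `s`. -/

section algHom

variable {ι : Type*} {d : ℕ} (φ : (ι → ℝ) →ₐ[ℝ] Matrix (Fin d) (Fin d) ℝ)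

theorem exp_algHom_pi [Fintype ι] (f : ι → ℝ) :
    NormedSpace.exp (φ f) = φ (fun k => Real.exp (f k)) := by
  let _ := Matrix.linftyOpNormedRing (n := Fin d) (α := ℝ)
  let _ := Matrix.linftyOpNormedAlgebra (n := Fin d) (R := ℝ) (α := ℝ)
  have hmap := NormedSpace.map_exp φ φ.toLinearMap.continuous_of_finiteDimensional f
  rw [Pi.exp_def] at hmap
  convert hmap.symm using 1
  -- `map_exp` sees matrices through the `linftyOp` norm, whose topology is defeq to the usual one
  · rfl
  · simp only [Real.exp_eq_exp_ℝ]

theorem sinhM_algHom_pi [Fintype ι] (f : ι → ℝ) :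
    sinhM (φ f) = φ (fun k => Real.sinh (f k)) := by
  simp only [sinhM, ← map_neg, exp_algHom_pi, ← map_sub, ← map_smul, Real.sinh_eq]
  congr 1
  ext k
  simp [div_eq_inv_mul]

theorem coshM_algHom_pi [Fintype ι] (f : ι → ℝ) :
    coshM (φ f) = φ (fun k => Real.cosh (f k)) := by
  simp only [coshM, ← map_neg, exp_algHom_pi, ← map_add, ← map_smul, Real.cosh_eq]
  congr 1
  ext k
  simp [div_eq_inv_mul]

theorem inv_algHom_pi {f : ι → ℝ} (hf : ∀ k, f k ≠ 0) : (φ f)⁻¹ = φ f⁻¹ := by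
  refine Matrix.inv_eq_right_inv ?_
  rw [← map_mul, show f * f⁻¹ = 1 from funext fun k => mul_inv_cancel₀ (hf k), map_one]

end algHom

theorem intervalIntegral_linearMap_pi {ι : Type*} [Fintype ι] (L : (ι → ℝ) →ₗ[ℝ] ℝ)
    {F : ℝ → ι → ℝ} {a b : ℝ} (hF : ∀ k, IntervalIntegrable (fun t => F t k) volume a b) :
    ∫ t in a..b, L (F t) = L (fun k => ∫ t in a..b, F t k) := by
  classical
  have hL (x : ι → ℝ) := L.pi_apply_eq_sum_univ x
  simp only [smul_eq_mul] at hL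
  conv_rhs => rw [hL]
  rw [intervalIntegral.integral_congr fun t _ => hL (F t),
    intervalIntegral.integral_finsetSum fun k _ => (hF k).mul_const _]
  simp_rw [intervalIntegral.integral_mul_const]

theorem of_intervalIntegral_map_pi {ι m n G : Type*} [Fintype ι]
    [FunLike G (ι → ℝ) (Matrix m n ℝ)] [LinearMapClass G ℝ (ι → ℝ) (Matrix m n ℝ)]
    (φ : G) {F : ℝ → ι → ℝ} {a b : ℝ}
    (hF : ∀ k, IntervalIntegrable (fun t => F t k) volume a b) :
    Matrix.of (fun i j => ∫ t in a..b, φ (F t) i j) = φ (fun k => ∫ t in a..b, F t k) := by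
  ext i j
  exact intervalIntegral_linearMap_pi
    ((entryLinearMap ℝ ℝ i j).comp (φ : (ι → ℝ) →ₗ[ℝ] Matrix m n ℝ)) hF

def conjDiagonal {d : ℕ} (U : unitary (Matrix (Fin d) (Fin d) ℝ)) :
    (Fin d → ℝ) →ₐ[ℝ] Matrix (Fin d) (Fin d) ℝ :=
  (Unitary.conjStarAlgAut ℝ _ U).toAlgEquiv.toAlgHom.comp (diagonalAlgHom ℝ)

section conjDiagonal

variable {d : ℕ} (U : unitary (Matrix (Fin d) (Fin d) ℝ)) (f : Fin d → ℝ)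

theorem conjDiagonal_apply :
    conjDiagonal U f = U * diagonal f * star (U : Matrix (Fin d) (Fin d) ℝ) := rfl

theorem transpose_conjDiagonal : (conjDiagonal U f)ᵀ = conjDiagonal U f := by
  simp [conjDiagonal_apply, transpose_mul, Matrix.mul_assoc, star_eq_conjTranspose,
    conjTranspose_eq_transpose_of_trivial]

theorem trace_conjDiagonal : trace (conjDiagonal U f) = ∑ k, f k := by
  rw [conjDiagonal_apply, trace_mul_cycle, Unitary.star_mul_self_of_mem U.2, Matrix.one_mul,
    trace_diagonal]

theorem matNorm_conjDiagonal : matNorm (conjDiagonal U f) = Real.sqrt (∑ k, f k ^ 2) := by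
  have hsum (M : Matrix (Fin d) (Fin d) ℝ) : ∑ i, ∑ j, M i j ^ 2 = trace (Mᵀ * M) := by
    simp only [trace, diag_apply, mul_apply, transpose_apply, sq]
    exact Finset.sum_comm
  rw [matNorm, hsum, transpose_conjDiagonal, ← map_mul, trace_conjDiagonal]
  simp [sq]

end conjDiagonal

theorem Matrix.PosDef.exists_eq_conjDiagonal {d : ℕ} {σ : Matrix (Fin d) (Fin d) ℝ}
    (hσ : σ.PosDef) :
    ∃ (U : unitary (Matrix (Fin d) (Fin d) ℝ)) (μ : Fin d → ℝ),
      (∀ k, 0 < μ k) ∧ σ = conjDiagonal U μ := by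
  refine ⟨hσ.1.eigenvectorUnitary, hσ.1.eigenvalues, hσ.eigenvalues_pos, ?_⟩
  conv_lhs => rw [hσ.1.spectral_theorem]
  rfl

theorem integral_cosh_sq (β s T : ℝ) (hβ : β ≠ 0) :
    ∫ t in s..T, Real.cosh (β * (T - t)) ^ 2
      = (T - s) / 2 + Real.sinh (2 * (β * (T - s))) / (4 * β) := by
  have hderiv : ∀ t ∈ Set.uIcc s T, HasDerivAt
      (fun u => u / 2 - Real.sinh (2 * (β * (T - u))) / (4 * β))
      (Real.cosh (β * (T - t)) ^ 2) t := by
    intro t _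
    have hsinh := (Real.hasDerivAt_sinh _).comp t
      ((((hasDerivAt_id' t).const_sub T).const_mul β).const_mul 2)
    refine (((hasDerivAt_id t).div_const 2).sub (hsinh.div_const (4 * β))).congr_deriv ?_
    rw [Real.cosh_two_mul, Real.sinh_sq]
    field_simp
    ring
  rw [intervalIntegral.integral_eq_sub_of_hasDerivAt hderiv
    ((by fun_prop : Continuous _).intervalIntegrable _ _)]
  simp only [sub_self, mul_zero, Real.sinh_zero, zero_div]
  ring

def scalarGap (A μ Λ s T : ℝ) : ℝ :=
  (2 * Λ)⁻¹ * (∫ t in s..T,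
      (Real.cosh (Real.sqrt A * (T - t) / Λ * μ)
        * (Real.sinh (Real.sqrt A * (T - s) / Λ * μ))⁻¹) ^ 2)
    - (4 * Real.sqrt A)⁻¹ * μ⁻¹

theorem scalarGap_eq {A μ Λ s T : ℝ} (hA : 0 < A) (hμ : 0 < μ) (hΛ : 0 < Λ) (hs : s < T) :
    scalarGap A μ Λ s T
      = (T - s) / (4 * Λ * Real.sinh (Real.sqrt A * μ * (T - s) / Λ) ^ 2)
        + Real.exp (-(Real.sqrt A * μ * (T - s) / Λ))
          / (4 * (Real.sqrt A * μ) * Real.sinh (Real.sqrt A * μ * (T - s) / Λ)) := by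
  obtain ⟨β, hβdef⟩ : ∃ β, β = Real.sqrt A * μ / Λ := ⟨_, rfl⟩
  have hβ : 0 < β := by rw [hβdef]; positivity
  have hsinh : 0 < Real.sinh (β * (T - s)) := Real.sinh_pos_iff.2 (by nlinarith)
  have harg : ∀ t, Real.sqrt A * (T - t) / Λ * μ = β * (T - t) := fun t => by rw [hβdef]; ring
  simp only [scalarGap, harg]
  simp_rw [mul_pow, intervalIntegral.integral_mul_const,
    integral_cosh_sq β s T hβ.ne']
  have hx : Real.sqrt A * μ * (T - s) / Λ = β * (T - s) := by rw [hβdef]; ring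
  rw [hx]
  generalize β * (T - s) = x at hsinh ⊢
  -- `cosh x - sinh x = exp (-x)` is where the leading terms `(4 √A μ)⁻¹` cancel
  rw [Real.sinh_two_mul, ← Real.cosh_sub_sinh]
  subst hβdef
  field_simp
  ring

theorem scalarGap_nonneg {A μ Λ s T : ℝ} (hA : 0 < A) (hμ : 0 < μ) (hΛ : 0 < Λ) (hs : s < T) :
    0 ≤ scalarGap A μ Λ s T := by
  have hτ := sub_pos.2 hs
  have : 0 < Real.sinh (Real.sqrt A * μ * (T - s) / Λ) := Real.sinh_pos_iff.2 (by positivity)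
  rw [scalarGap_eq hA hμ hΛ hs]
  positivity

theorem scalarGap_le {A μ Λ s T : ℝ} (hA : 0 < A) (hμ : 0 < μ) (hΛ : 0 < Λ) (hs : s < T) :
    scalarGap A μ Λ s T ≤ Λ / (2 * A * μ ^ 2 * (T - s)) := by
  have hτ := sub_pos.2 hs
  obtain ⟨a, ha, rfl⟩ : ∃ a, 0 < a ∧ A = a ^ 2 :=
    ⟨_, Real.sqrt_pos.2 hA, (Real.sq_sqrt hA.le).symm⟩
  rw [scalarGap_eq hA hμ hΛ hs, Real.sqrt_sq ha.le]
  obtain ⟨x, hxdef⟩ : ∃ x, x = a * μ * (T - s) / Λ := ⟨_, rfl⟩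
  rw [← hxdef]
  have hx : 0 < x := by rw [hxdef]; positivity
  have hxs : x ≤ Real.sinh x := (Real.self_lt_sinh_iff.2 hx).le
  have h1 : (T - s) / (4 * Λ * Real.sinh x ^ 2) ≤ Λ / (4 * a ^ 2 * μ ^ 2 * (T - s)) :=
    calc (T - s) / (4 * Λ * Real.sinh x ^ 2) ≤ (T - s) / (4 * Λ * x ^ 2) := by gcongr
      _ = Λ / (4 * a ^ 2 * μ ^ 2 * (T - s)) := by rw [hxdef]; field_simp
  have h2 : Real.exp (-x) / (4 * (a * μ) * Real.sinh x)
      ≤ Λ / (4 * a ^ 2 * μ ^ 2 * (T - s)) :=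
    calc Real.exp (-x) / (4 * (a * μ) * Real.sinh x)
        ≤ 1 / (4 * (a * μ) * x) := by
          gcongr
          exact Real.exp_le_one_iff.2 (by linarith)
      _ = Λ / (4 * a ^ 2 * μ ^ 2 * (T - s)) := by rw [hxdef]; field_simp
  calc _ ≤ Λ / (4 * a ^ 2 * μ ^ 2 * (T - s)) + Λ / (4 * a ^ 2 * μ ^ 2 * (T - s)) :=
        add_le_add h1 h2
    _ = Λ / (2 * a ^ 2 * μ ^ 2 * (T - s)) := by field_simp; ring

def kernelGapMatrix {d : ℕ} (T A : ℝ) (σ : Matrix (Fin d) (Fin d) ℝ) (Λ s : ℝ) :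
    Matrix (Fin d) (Fin d) ℝ :=
  (2 * Λ)⁻¹ • (Matrix.of fun i j => ∫ t in s..T, (Kmat T A σ Λ t s * Kmat T A σ Λ t s) i j)
    - (4 * Real.sqrt A)⁻¹ • σ⁻¹

theorem kernelGapMatrix_conjDiagonal {d : ℕ} (U : unitary (Matrix (Fin d) (Fin d) ℝ))
    {μ : Fin d → ℝ} {T A Λ s : ℝ} (hμ : ∀ k, μ k ≠ 0) (hA : 0 < A) (hΛ : Λ ≠ 0) (hs : s ≠ T) :
    kernelGapMatrix T A (conjDiagonal U μ) Λ s
      = conjDiagonal U (fun k => scalarGap A (μ k) Λ s T) := by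
  have hsinh : ∀ k, Real.sinh (Real.sqrt A * (T - s) / Λ * μ k) ≠ 0 := fun k => by
    rw [Ne, Real.sinh_eq_zero]
    exact mul_ne_zero
      (div_ne_zero (mul_ne_zero (Real.sqrt_pos.2 hA).ne' (sub_ne_zero.2 hs.symm)) hΛ) (hμ k)
  have hK : ∀ t, Kmat T A (conjDiagonal U μ) Λ t s = conjDiagonal U (fun k =>
      Real.cosh (Real.sqrt A * (T - t) / Λ * μ k)
        * (Real.sinh (Real.sqrt A * (T - s) / Λ * μ k))⁻¹) := by
    intro t
    simp only [Kmat, ← map_smul, coshM_algHom_pi, sinhM_algHom_pi, Pi.smul_apply, smul_eq_mul,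
      inv_algHom_pi _ hsinh, ← map_mul]
    rfl
  simp only [kernelGapMatrix, hK, ← map_mul]
  rw [of_intervalIntegral_map_pi (conjDiagonal U)
      fun k => (by fun_prop : Continuous _).intervalIntegrable _ _,
    inv_algHom_pi _ hμ, ← map_smul, ← map_smul, ← map_sub]
  congr 1
  ext k
  simp [scalarGap, sq]

theorem matNorm_kernelGapMatrix_le {d : ℕ} (U : unitary (Matrix (Fin d) (Fin d) ℝ))
    {μ : Fin d → ℝ} {T A Λ s ε : ℝ} (hμ : ∀ k, 0 < μ k) (hA : 0 < A) (hΛ : 0 < Λ) (hε : 0 < ε)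
    (hs : s ≤ T - ε) :
    matNorm (kernelGapMatrix T A (conjDiagonal U μ) Λ s)
      ≤ Real.sqrt (∑ k, (1 / (2 * A * μ k ^ 2 * ε)) ^ 2) * Λ := by
  have hsT : s < T := by linarith
  have hgap (k : Fin d) : scalarGap A (μ k) Λ s T ≤ Λ * (1 / (2 * A * μ k ^ 2 * ε)) := by
    refine (scalarGap_le hA (hμ k) hΛ hsT).trans ?_
    rw [mul_one_div]
    have := hμ k
    gcongr
    linarith
  rw [kernelGapMatrix_conjDiagonal U (fun k => (hμ k).ne') hA hΛ.ne' hsT.ne,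
    matNorm_conjDiagonal]
  calc Real.sqrt (∑ k, scalarGap A (μ k) Λ s T ^ 2)
      ≤ Real.sqrt (∑ k, (Λ * (1 / (2 * A * μ k ^ 2 * ε))) ^ 2) :=
        Real.sqrt_le_sqrt <| Finset.sum_le_sum fun k _ =>
          pow_le_pow_left₀ (scalarGap_nonneg hA (hμ k) hΛ hsT) (hgap k) 2
    _ = Real.sqrt (∑ k, (1 / (2 * A * μ k ^ 2 * ε)) ^ 2) * Λ := by
        simp_rw [mul_pow, ← Finset.mul_sum]
        rw [Real.sqrt_mul (sq_nonneg Λ), Real.sqrt_sq hΛ.le, mul_comm]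

theorem tendsto_sSup_nhdsGT_zero_of_le_mul {S : ℝ → Set ℝ} {C : ℝ} (hC : 0 ≤ C)
    (hnonneg : ∀ Λ > 0, ∀ r ∈ S Λ, 0 ≤ r) (hle : ∀ Λ > 0, ∀ r ∈ S Λ, r ≤ C * Λ) :
    Tendsto (fun Λ => sSup (S Λ)) (nhdsWithin 0 (Set.Ioi 0)) (nhds 0) := by
  have hCΛ : Tendsto (fun Λ : ℝ => C * Λ) (nhdsWithin 0 (Set.Ioi 0)) (nhds 0) :=
    ((continuous_const_mul C).tendsto' 0 0 (mul_zero C)).mono_left nhdsWithin_le_nhds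
  refine tendsto_of_tendsto_of_tendsto_of_le_of_le' tendsto_const_nhds hCΛ ?_ ?_ <;>
    filter_upwards [self_mem_nhdsWithin] with Λ (hΛ : 0 < Λ)
  · exact Real.sSup_nonneg (hnonneg Λ hΛ)
  · exact Real.sSup_le (hle Λ hΛ) (mul_nonneg hC hΛ.le)

theorem stmt9_general (T : ℝ) {d : ℕ}
    (σ : Matrix (Fin d) (Fin d) ℝ) (hσ : σ.PosDef) (A : ℝ) (hA : 0 < A) :
    ∀ ε : ℝ, 0 < ε → ε < T →
      Tendsto (fun Λ : ℝ =>
          sSup {r | ∃ s : ℝ, 0 ≤ s ∧ s ≤ T - ε ∧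
            r = matNorm ((2 * Λ)⁻¹ •
                  (Matrix.of fun i j =>
                    ∫ t in s..T, (Kmat T A σ Λ t s * Kmat T A σ Λ t s) i j)
                - (4 * Real.sqrt A)⁻¹ • σ⁻¹)})
        (nhdsWithin 0 (Set.Ioi 0)) (nhds 0) := by
  intro ε hε _
  obtain ⟨U, μ, hμ, rfl⟩ := hσ.exists_eq_conjDiagonal
  refine tendsto_sSup_nhdsGT_zero_of_le_mul
    (Real.sqrt_nonneg (∑ k, (1 / (2 * A * μ k ^ 2 * ε)) ^ 2)) ?_ ?_
  · rintro Λ - r ⟨s, -, -, rfl⟩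
    exact Real.sqrt_nonneg _
  · rintro Λ hΛ r ⟨s, -, hs, rfl⟩
    exact matNorm_kernelGapMatrix_le U hμ hA hΛ hε hs

/-- For every `ε ∈ (0,T)`,
`lim_{Λ↓0} sup_{0 ≤ s ≤ T−ε} ‖(1/(2Λ))·∫_s^T (K^Λ_{t,s})² dt − σ⁻¹/(4√A)‖ = 0`. -/
theorem stmt9 (T : ℝ) (hT : 0 < T) {d : ℕ} (hd : 1 ≤ d)
    (σ : Matrix (Fin d) (Fin d) ℝ) (hσ : σ.PosDef) (A : ℝ) (hA : 0 < A) :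
    ∀ ε : ℝ, 0 < ε → ε < T →
      Tendsto (fun Λ : ℝ =>
          sSup {r | ∃ s : ℝ, 0 ≤ s ∧ s ≤ T - ε ∧
            r = matNorm ((2 * Λ)⁻¹ •
                  (Matrix.of fun i j =>
                    ∫ t in s..T, (Kmat T A σ Λ t s * Kmat T A σ Λ t s) i j)
                - (4 * Real.sqrt A)⁻¹ • σ⁻¹)})
        (nhdsWithin 0 (Set.Ioi 0)) (nhds 0) :=
  stmt9_general T σ hσ A hA
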